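/- The single-stream version of sampled fictitious play can incur linear expected regret against an adaptive opponent. Precisely, in the setting below with N = 2 strategies, there is an explicit deterministic adaptive opponent — on each odd round t it sets g_t = (0,0); on each even round t it sets g_t = (0, 1 − 0.1^t) if the player played strategy 1 in round t−1 and g_t = (1 − 0.1^t, 0) if the player played strategy 2 in round t−1 — such that the expected regret of the single-stream procedure satisfies E[R_T] ≥ 0.225·T − 2 for every T. -/

import Mathlib

open MeasureTheory ProbabilityTheory

open scoped Classical in
/-- The set of strategies maximizing a score function. -/
noncomputable def argmaxSet {N : ℕ} (f : Fin N → ℝ) : Finset (Fin N) :=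
  Finset.univ.filter (fun j => ∀ j', f j' ≤ f j)

/-- Uniform selection from a finite set of strategies: given `u` uniform on `[0,1)`, `pick`
returns the `⌊u·|s|⌋`-th element of `s` in increasing order, which is a uniformly random
element of `s` whenever `s` is nonempty. -/
noncomputable def pick {N : ℕ} [NeZero N] (s : Finset (Fin N)) (u : ℝ) : Fin N :=
  (s.sort (· ≤ ·)).getD ⌊u * s.card⌋.toNat 0

/-!
Even rounds pay nothing, and at round `2m+1` the opponent pays `1 - 0.1^(2m+2)` to the strategy
the player did not use at round `2m`. As long as every sampled odd round so far had `ε = -1`, all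
scores vanish. Once some `ε (2i+1) = 1`, the score gap stays nonzero and below
`2 (1 - 0.1^(2m+2))` in absolute value: the rewarded strategy is always the trailing one, so a
sampled reward overshoots the gap and flips the leader without ever producing a tie. From then on
the player repeats at round `2m+1` its move of round `2m`, for which the opponent pays nothing.
Hence the expected gain at round `2m+1` is at most `P(ε 1 = ε 3 = ⋯ = ε (2m-1) = -1) = 2^(-m)`,
and the expected total gain stays below `2`, while the two strategies together earn about
`0.99 T / 2`, so the better one earns about `T / 4`.
-/

open Finset

theorem pick_singleton {N : ℕ} [NeZero N] (j : Fin N) {u : ℝ} (hu : u < 1) :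
    pick {j} u = j := by
  have : ⌊u * (({j} : Finset (Fin N)).card : ℝ)⌋.toNat = 0 := by
    simp only [card_singleton, Nat.cast_one, mul_one, Int.toNat_eq_zero]
    exact Int.lt_add_one_iff.mp (Int.floor_lt.mpr (by simpa using hu))
  rw [pick, this, sort_singleton]
  rfl

theorem argmaxSet_eq_singleton {N : ℕ} {f : Fin N → ℝ} {j : Fin N} (h : ∀ i ≠ j, f i < f j) :
    argmaxSet f = {j} := by
  ext i
  simp only [argmaxSet, mem_filter, mem_univ, true_and, mem_singleton]
  refine ⟨fun hi => by_contra fun hij => (h i hij).not_ge (hi j), ?_⟩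
  rintro rfl i'
  rcases eq_or_ne i' i with rfl | hi'
  · rfl
  · exact (h i' hi').le

theorem measurable_pick_argmaxSet {N : ℕ} [NeZero N] :
    Measurable fun p : (Fin N → ℝ) × ℝ => pick (argmaxSet p.1) p.2 := by
  refine measurable_to_countable' fun j => ?_
  have hpick : ∀ s : Finset (Fin N), Measurable (pick s) := fun s =>
    (Measurable.of_discrete (f := fun z : ℤ => (s.sort (· ≤ ·)).getD z.toNat 0)).comp
      (Int.measurable_floor.comp (measurable_id.mul_const _))
  have hargmax : ∀ s : Finset (Fin N), MeasurableSet {f : Fin N → ℝ | argmaxSet f = s} := by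
    intro s
    simp only [Finset.ext_iff, argmaxSet, mem_filter, mem_univ, true_and]
    measurability
  have : (fun p : (Fin N → ℝ) × ℝ => pick (argmaxSet p.1) p.2) ⁻¹' {j}
      = ⋃ s : Finset (Fin N),
          Prod.fst ⁻¹' {f | argmaxSet f = s} ∩ Prod.snd ⁻¹' (pick s ⁻¹' {j}) := by
    ext p; simp
  rw [this]
  exact MeasurableSet.iUnion fun s =>
    (measurable_fst (hargmax s)).inter (measurable_snd (hpick s (measurableSet_singleton j)))

def sampledScore {N : ℕ} (e : ℕ → ℝ) (g : ℕ → Fin N → ℝ) (t : ℕ) (j : Fin N) : ℝ :=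
  ∑ τ ∈ range t, (1 + e τ) * g τ j

def scoreGap (e : ℕ → ℝ) (g : ℕ → Fin 2 → ℝ) (t : ℕ) : ℝ :=
  sampledScore e g t 0 - sampledScore e g t 1

def opponentGain (t : ℕ) (prev j : Fin 2) : ℝ :=
  if t % 2 = 1 ∧ j ≠ prev then 1 - 0.1 ^ (t + 1) else 0

section Opponent

variable (t : ℕ) (prev j : Fin 2)

theorem opponentGain_nonneg : 0 ≤ opponentGain t prev j := by
  have : (0.1 : ℝ) ^ (t + 1) ≤ 1 := pow_le_one₀ (by norm_num) (by norm_num)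
  unfold opponentGain; split_ifs <;> linarith

theorem opponentGain_le_one : opponentGain t prev j ≤ 1 := by
  have : (0 : ℝ) ≤ 0.1 ^ (t + 1) := by positivity
  unfold opponentGain; split_ifs <;> linarith

theorem opponentGain_self : opponentGain t prev prev = 0 := by
  simp [opponentGain]

theorem opponentGain_zero_add_one :
    opponentGain t prev 0 + opponentGain t prev 1 = if t % 2 = 1 then 1 - 0.1 ^ (t + 1) else 0 := by
  fin_cases prev <;> by_cases ht : t % 2 = 1 <;> simp [opponentGain, ht]

theorem opponentGain_zero_sub_one (ht : t % 2 = 1) :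
    opponentGain t prev 0 - opponentGain t prev 1
      = if prev = 0 then -(1 - 0.1 ^ (t + 1)) else 1 - 0.1 ^ (t + 1) := by
  fin_cases prev <;> simp [opponentGain, ht]

theorem ite_eq_opponentGain (ht : t % 2 = 1) :
    (if prev = 0 then (if j = 1 then 1 - (0.1 : ℝ) ^ (t + 1) else 0)
      else (if j = 0 then 1 - (0.1 : ℝ) ^ (t + 1) else 0)) = opponentGain t prev j := by
  fin_cases prev <;> fin_cases j <;> simp [opponentGain, ht]

end Opponent

theorem abs_add_mul_le_of_mul_nonpos {d δ a c : ℝ} (hδ : |δ| = a) (hopp : d * δ ≤ 0)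
    (hd : |d| < 2 * a) (hc : c = 0 ∨ c = 2) :
    |d + c * δ| ≤ 2 * a ∧ (d ≠ 0 ∨ c = 2 → d + c * δ ≠ 0) := by
  rcases hc with rfl | rfl
  · simp only [zero_mul, add_zero]
    exact ⟨hd.le, by rintro (h | h); exacts [h, absurd h (by norm_num)]⟩
  have ha : 0 < a := by linarith [abs_nonneg d]
  rw [abs_lt] at hd
  rcases (abs_eq ha.le).mp hδ with rfl | rfl
  · have hd0 : d ≤ 0 := nonpos_of_mul_nonpos_left hopp ha
    refine ⟨abs_le.mpr ⟨?_, ?_⟩, fun _ => ?_⟩ <;> linarith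
  · have hd0 : 0 ≤ d := by nlinarith
    refine ⟨abs_le.mpr ⟨?_, ?_⟩, fun _ => ?_⟩ <;> linarith

section Dynamics

variable {e v : ℕ → ℝ} {k : ℕ → Fin 2} {g : ℕ → Fin 2 → ℝ}

theorem scoreGap_succ (t : ℕ) :
    scoreGap e g (t + 1) = scoreGap e g t + (1 + e t) * (g t 0 - g t 1) := by
  simp only [scoreGap, sampledScore, sum_range_succ]
  ring

theorem play_eq_of_scoreGap_ne_zero {t : ℕ}
    (hk : k t = pick (argmaxSet (sampledScore e g t)) (v t)) (hv : v t < 1)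
    (h : scoreGap e g t ≠ 0) : k t = if 0 < scoreGap e g t then 0 else 1 := by
  split_ifs with hpos
  · rw [hk, argmaxSet_eq_singleton, pick_singleton _ hv]
    intro i hi
    obtain rfl : i = 1 := by omega
    unfold scoreGap at hpos
    linarith
  · have hneg : scoreGap e g t < 0 := lt_of_le_of_ne (not_lt.mp hpos) h
    rw [hk, argmaxSet_eq_singleton, pick_singleton _ hv]
    intro i hi
    obtain rfl : i = 0 := by omega
    unfold scoreGap at hneg
    linarith

theorem scoreGap_two_mul_add_one (hg : ∀ t j, g t j = opponentGain t (k (t - 1)) j) (m : ℕ) :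
    scoreGap e g (2 * m + 1) = scoreGap e g (2 * m) := by
  simp [scoreGap_succ, hg, opponentGain]

theorem scoreGap_mul_gain_sub_nonpos (hv : ∀ t, v t < 1)
    (hg : ∀ t j, g t j = opponentGain t (k (t - 1)) j)
    (hk : ∀ t, k t = pick (argmaxSet (sampledScore e g t)) (v t)) (m : ℕ) :
    scoreGap e g (2 * m) * (g (2 * m + 1) 0 - g (2 * m + 1) 1) ≤ 0 := by
  rcases eq_or_ne (scoreGap e g (2 * m)) 0 with h | h
  · simp [h]
  have ha : (0 : ℝ) ≤ 1 - 0.1 ^ (2 * m + 1 + 1) := by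
    linarith [pow_le_one₀ (n := 2 * m + 1 + 1) (by norm_num : (0 : ℝ) ≤ 0.1) (by norm_num)]
  rw [hg, hg, opponentGain_zero_sub_one _ _ (by omega), Nat.add_sub_cancel,
    play_eq_of_scoreGap_ne_zero (hk _) (hv _) h]
  by_cases hpos : 0 < scoreGap e g (2 * m)
  · simp only [hpos, if_true]
    nlinarith
  · simp only [hpos, if_false, one_ne_zero]
    nlinarith [h.lt_or_gt]

theorem scoreGap_invariant (he : ∀ t, e t = 1 ∨ e t = -1) (hv : ∀ t, v t < 1)
    (hg : ∀ t j, g t j = opponentGain t (k (t - 1)) j)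
    (hk : ∀ t, k t = pick (argmaxSet (sampledScore e g t)) (v t)) (m : ℕ) :
    |scoreGap e g (2 * m)| < 2 * (1 - 0.1 ^ (2 * m + 2))
      ∧ ((∃ i < m, e (2 * i + 1) = 1) → scoreGap e g (2 * m) ≠ 0) := by
  induction m with
  | zero => norm_num [scoreGap, sampledScore]
  | succ m ih =>
    have hstep : scoreGap e g (2 * (m + 1)) = scoreGap e g (2 * m)
        + (1 + e (2 * m + 1)) * (g (2 * m + 1) 0 - g (2 * m + 1) 1) := by
      rw [show 2 * (m + 1) = 2 * m + 1 + 1 by ring, scoreGap_succ, scoreGap_two_mul_add_one hg]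
    have hδ : |g (2 * m + 1) 0 - g (2 * m + 1) 1| = 1 - 0.1 ^ (2 * m + 2) := by
      have : (0.1 : ℝ) ^ (2 * m + 2) < 1 := pow_lt_one₀ (by norm_num) (by norm_num) (by omega)
      rw [hg, hg, opponentGain_zero_sub_one _ _ (by omega)]
      split_ifs
      · rw [abs_neg, abs_of_pos (by linarith)]
      · exact abs_of_pos (by linarith)
    have hc : 1 + e (2 * m + 1) = 0 ∨ 1 + e (2 * m + 1) = 2 := by
      rcases he (2 * m + 1) with h | h <;> rw [h] <;> norm_num
    obtain ⟨hle, hne⟩ := abs_add_mul_le_of_mul_nonpos hδ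
      (scoreGap_mul_gain_sub_nonpos hv hg hk m) ih.1 hc
    rw [hstep]
    refine ⟨hle.trans_lt ?_, ?_⟩
    · have : (0.1 : ℝ) ^ (2 * (m + 1) + 2) < 0.1 ^ (2 * m + 2) :=
        pow_lt_pow_right_of_lt_one₀ (by norm_num) (by norm_num) (by omega)
      linarith
    · rintro ⟨i, hi, hei⟩
      refine hne ?_
      rcases (Nat.lt_succ_iff_lt_or_eq.mp hi) with hi | rfl
      · exact Or.inl (ih.2 ⟨i, hi, hei⟩)
      · rw [hei]; norm_num

theorem gain_eq_zero_of_exists_heads (he : ∀ t, e t = 1 ∨ e t = -1) (hv : ∀ t, v t < 1)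
    (hg : ∀ t j, g t j = opponentGain t (k (t - 1)) j)
    (hk : ∀ t, k t = pick (argmaxSet (sampledScore e g t)) (v t)) {m : ℕ}
    (h : ∃ i < m, e (2 * i + 1) = 1) : g (2 * m + 1) (k (2 * m + 1)) = 0 := by
  have hne := (scoreGap_invariant he hv hg hk m).2 h
  have hsame : k (2 * m + 1) = k (2 * m) := by
    rw [play_eq_of_scoreGap_ne_zero (hk _) (hv _) (by rwa [scoreGap_two_mul_add_one hg]),
      play_eq_of_scoreGap_ne_zero (hk _) (hv _) hne, scoreGap_two_mul_add_one hg]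
  rw [hg, hsame, Nat.add_sub_cancel, opponentGain_self]

end Dynamics

theorem sum_range_ite_mod_two {M : Type*} [AddCommMonoid M] (f : ℕ → M) (T : ℕ) :
    ∑ t ∈ range T, (if t % 2 = 1 then f (t / 2) else 0) = ∑ m ∈ range (T / 2), f m := by
  induction T with
  | zero => simp
  | succ T ih =>
    rw [sum_range_succ, ih]
    rcases Nat.mod_two_eq_zero_or_one T with hT | hT
    · rw [if_neg (by omega), add_zero, show (T + 1) / 2 = T / 2 by omega]
    · rw [if_pos hT, show (T + 1) / 2 = T / 2 + 1 by omega, sum_range_succ]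

theorem add_div_two_le_iSup (f : Fin 2 → ℝ) : (f 0 + f 1) / 2 ≤ ⨆ j, f j := by
  have hb := (Set.finite_range f).bddAbove
  linarith [le_ciSup hb 0, le_ciSup hb 1]

section Probability

variable {Ω : Type*} [MeasurableSpace Ω] {μ : Measure Ω}

theorem ae_eq_one_or_eq_neg_one [IsProbabilityMeasure μ] {X : Ω → ℝ} (hX : Measurable X)
    (h1 : μ {ω | X ω = 1} = 1 / 2) (h2 : μ {ω | X ω = -1} = 1 / 2) :
    ∀ᵐ ω ∂μ, X ω = 1 ∨ X ω = -1 := by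
  have hdisj : Disjoint {ω | X ω = 1} {ω | X ω = -1} :=
    Set.disjoint_left.mpr fun ω h h' => by norm_num [Set.mem_ofPred_eq.mp h] at h'
  have hunion : μ ({ω | X ω = 1} ∪ {ω | X ω = -1}) = 1 := by
    rw [measure_union hdisj (hX (measurableSet_singleton _)), h1, h2, one_div,
      ENNReal.inv_two_add_inv_two]
  exact (prob_compl_eq_zero_iff ((hX (measurableSet_singleton _)).union
    (hX (measurableSet_singleton _)))).mpr hunion

theorem ae_lt_one_of_map_eq {X : Ω → ℝ} (hX : Measurable X)
    (h : μ.map X = volume.restrict (Set.Ico 0 1)) : ∀ᵐ ω ∂μ, X ω < 1 := by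
  have : ∀ᵐ x ∂μ.map X, x < 1 := by
    rw [h]
    exact (ae_restrict_mem measurableSet_Ico).mono fun x hx => hx.2
  exact ae_of_ae_map hX.aemeasurable this

theorem ProbabilityTheory.iIndepFun.measure_biInter_preimage_eq_pow {ι β : Type*}
    [MeasurableSpace β] {X : ι → Ω → β} (hX : iIndepFun X μ) {s : Set β} (hs : MeasurableSet s)
    {p : ENNReal}
    (hp : ∀ i, μ (X i ⁻¹' s) = p) (S : Finset ι) : μ (⋂ i ∈ S, X i ⁻¹' s) = p ^ S.card := by
  rw [hX.measure_inter_preimage_eq_mul S fun _ _ => hs]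
  simp [hp]

variable [IsProbabilityMeasure μ] {N : ℕ} [NeZero N] {g : ℕ → Ω → Fin N → ℝ} {k : ℕ → Ω → Fin N}

theorem integrable_regret (T : ℕ) (hg : ∀ t j, Measurable fun ω => g t ω j)
    (hgk : ∀ t, Measurable fun ω => g t ω (k t ω)) (h0 : ∀ t ω j, 0 ≤ g t ω j)
    (h1 : ∀ t ω j, g t ω j ≤ 1) :
    Integrable (fun ω => (⨆ j, ∑ t ∈ range T, g t ω j) - ∑ t ∈ range T, g t ω (k t ω)) μ := by
  have hmeas := (Measurable.iSup fun j => Finset.measurable_sum (range T) fun t _ => hg t j).sub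
    (Finset.measurable_sum (range T) fun t _ => hgk t)
  refine Integrable.of_bound hmeas.aestronglyMeasurable T (ae_of_all _ fun ω => ?_)
  have hS0 : ∀ j, 0 ≤ ∑ t ∈ range T, g t ω j := fun j => sum_nonneg fun t _ => h0 t ω j
  have hS1 : ∀ j, ∑ t ∈ range T, g t ω j ≤ T := fun j =>
    (sum_le_sum fun t _ => h1 t ω j).trans (by simp)
  have hsup0 : 0 ≤ ⨆ j, ∑ t ∈ range T, g t ω j :=
    (hS0 0).trans (le_ciSup (Set.finite_range fun j => ∑ t ∈ range T, g t ω j).bddAbove 0)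
  have hsup1 : ⨆ j, ∑ t ∈ range T, g t ω j ≤ T := ciSup_le hS1
  have hG0 : 0 ≤ ∑ t ∈ range T, g t ω (k t ω) := sum_nonneg fun t _ => h0 t ω _
  have hG1 : ∑ t ∈ range T, g t ω (k t ω) ≤ T :=
    (sum_le_sum fun t _ => h1 t ω (k t ω)).trans (by simp)
  rw [Real.norm_eq_abs, abs_sub_le_iff]
  constructor <;> linarith

end Probability

theorem half_sub_sum_integral_le_integral_regret {Ω : Type*} [MeasurableSpace Ω] {μ : Measure Ω}
    [IsProbabilityMeasure μ] {g : ℕ → Ω → Fin 2 → ℝ} {k : ℕ → Ω → Fin 2} (T : ℕ) {W : ℝ}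
    (hW : ∀ ω, ∑ t ∈ range T, (g t ω 0 + g t ω 1) = W)
    (hg : ∀ t j, Measurable fun ω => g t ω j) (hgk : ∀ t, Measurable fun ω => g t ω (k t ω))
    (h0 : ∀ t ω j, 0 ≤ g t ω j) (h1 : ∀ t ω j, g t ω j ≤ 1) :
    W / 2 - ∑ t ∈ range T, ∫ ω, g t ω (k t ω) ∂μ
      ≤ ∫ ω, ((⨆ j, ∑ t ∈ range T, g t ω j) - ∑ t ∈ range T, g t ω (k t ω)) ∂μ := by
  have hint : ∀ t, Integrable (fun ω => g t ω (k t ω)) μ := fun t =>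
    Integrable.of_bound (hgk t).aestronglyMeasurable 1
      (ae_of_all _ fun ω => by
        rw [Real.norm_eq_abs, abs_of_nonneg (h0 t ω _)]
        exact h1 t ω _)
  rw [← integral_finsetSum _ fun t _ => hint t]
  calc W / 2 - ∫ ω, ∑ t ∈ range T, g t ω (k t ω) ∂μ
      = ∫ ω, (W / 2 - ∑ t ∈ range T, g t ω (k t ω)) ∂μ := by
        rw [integral_sub (integrable_const _) (integrable_finsetSum _ fun t _ => hint t),
          integral_const, probReal_univ, one_smul]
    _ ≤ _ := by
        refine integral_mono ((integrable_const _).sub (integrable_finsetSum _ fun t _ => hint t))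
          (integrable_regret T hg hgk h0 h1) fun ω => ?_
        have := add_div_two_le_iSup fun j => ∑ t ∈ range T, g t ω j
        rw [← sum_add_distrib, hW ω] at this
        dsimp only
        linarith

theorem linear_le_half_sub_geom_sum (T : ℕ) :
    0.225 * T - 2 ≤ 0.99 * (T / 2 : ℕ) / 2 - ∑ m ∈ range (T / 2), (1 / 2 : ℝ) ^ m := by
  have hT : (T : ℝ) ≤ 2 * (T / 2 : ℕ) + 1 := by exact_mod_cast (by omega : T ≤ 2 * (T / 2) + 1)
  rw [geom_sum_eq (by norm_num), show ∀ x : ℝ, (x - 1) / (1 / 2 - 1) = 2 - 2 * x by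
    intro x; ring]
  obtain ⟨M, hM⟩ : ∃ M, M = T / 2 := ⟨_, rfl⟩
  rw [← hM] at hT ⊢
  rcases le_or_gt 5 M with h5 | h5
  · have : (0 : ℝ) ≤ (1 / 2) ^ M := by positivity
    have : (5 : ℝ) ≤ M := by exact_mod_cast h5
    nlinarith
  · interval_cases M <;> push_cast at hT <;> norm_num <;> linarith

section SingleStream

variable {Ω : Type*} [MeasurableSpace Ω] {μ : Measure Ω} {ε u : ℕ → Ω → ℝ}
  {k : ℕ → Ω → Fin 2} {g : ℕ → Ω → Fin 2 → ℝ}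

theorem measurable_play (hεmeas : ∀ t, Measurable (ε t)) (humeas : ∀ t, Measurable (u t))
    (hg : ∀ t ω j, g t ω j = opponentGain t (k (t - 1) ω) j)
    (hplay : ∀ t ω, k t ω = pick (argmaxSet (fun j =>
        ∑ τ ∈ Finset.range t, (1 + ε τ ω) * g τ ω j)) (u t ω)) (t : ℕ) :
    Measurable (k t) := by
  induction t using Nat.strong_induction_on with
  | _ t ih =>
    have hgm : ∀ τ < t, ∀ j, Measurable fun ω => g τ ω j := fun τ hτ j => by
      simp_rw [hg]
      exact (Measurable.of_discrete (f := fun p : Fin 2 => opponentGain τ p j)).comp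
        (ih _ (by omega))
    have hscore : Measurable fun ω j => ∑ τ ∈ range t, (1 + ε τ ω) * g τ ω j :=
      measurable_pi_lambda _ fun j => Finset.measurable_sum _ fun τ hτ =>
        ((hεmeas τ).const_add 1).mul (hgm τ (mem_range.mp hτ) j)
    have hk : k t = (fun p : (Fin 2 → ℝ) × ℝ => pick (argmaxSet p.1) p.2) ∘
        fun ω => (fun j => ∑ τ ∈ range t, (1 + ε τ ω) * g τ ω j, u t ω) := funext (hplay t)
    rw [hk]
    exact measurable_pick_argmaxSet.comp (hscore.prodMk (humeas t))

theorem integral_gain_le [IsProbabilityMeasure μ] (hεmeas : ∀ t, Measurable (ε t))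
    (hεRad : ∀ t, μ {ω | ε t ω = 1} = 1 / 2 ∧ μ {ω | ε t ω = -1} = 1 / 2)
    (humeas : ∀ t, Measurable (u t)) (huUnif : ∀ t, μ.map (u t) = volume.restrict (Set.Ico 0 1))
    (hIndep : iIndepFun
        (fun (p : ℕ ⊕ ℕ) (ω : Ω) => Sum.elim (fun n => ε n ω) (fun n => u n ω) p) μ)
    (hg : ∀ t ω j, g t ω j = opponentGain t (k (t - 1) ω) j)
    (hplay : ∀ t ω, k t ω = pick (argmaxSet (fun j =>
        ∑ τ ∈ Finset.range t, (1 + ε τ ω) * g τ ω j)) (u t ω))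
    (hgk : ∀ t, Measurable fun ω => g t ω (k t ω)) (t : ℕ) :
    ∫ ω, g t ω (k t ω) ∂μ ≤ if t % 2 = 1 then (1 / 2) ^ (t / 2) else 0 := by
  rcases Nat.mod_two_eq_zero_or_one t with ht | ht
  · simp [hg, opponentGain, ht]
  obtain ⟨m, rfl⟩ : ∃ m, t = 2 * m + 1 := ⟨t / 2, by omega⟩
  rw [if_pos ht, show (2 * m + 1) / 2 = m by omega]
  set A := ⋂ i ∈ range m, ε (2 * i + 1) ⁻¹' {-1}
  have hAmeas : MeasurableSet A :=
    Finset.measurableSet_biInter _ fun i _ => hεmeas _ (measurableSet_singleton _)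
  have hA : μ A = (1 / 2) ^ m := by
    have := iIndepFun.measure_biInter_preimage_eq_pow (hIndep.precomp
      (g := fun i => Sum.inl (2 * i + 1)) fun i j h => by simpa using h)
      (measurableSet_singleton (-1)) (fun i => (hεRad (2 * i + 1)).2) (range m)
    rwa [card_range] at this
  have hbound : (fun ω => g (2 * m + 1) ω (k (2 * m + 1) ω)) ≤ᵐ[μ] A.indicator 1 := by
    have hε := ae_all_iff.mpr fun n =>
      ae_eq_one_or_eq_neg_one (hεmeas n) (hεRad n).1 (hεRad n).2
    have hu := ae_all_iff.mpr fun n => ae_lt_one_of_map_eq (humeas n) (huUnif n)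
    filter_upwards [hε, hu] with ω hεω huω
    by_cases hω : ω ∈ A
    · rw [Set.indicator_of_mem hω, hg]
      exact opponentGain_le_one _ _ _
    · rw [Set.indicator_of_notMem hω]
      simp only [A, Set.mem_iInter, mem_range, not_forall] at hω
      obtain ⟨i, hi, hεi⟩ := hω
      exact (gain_eq_zero_of_exists_heads hεω huω (fun t j => hg t ω j) (fun t => hplay t ω)
        ⟨i, hi, (hεω _).resolve_right hεi⟩).le
  have hint : Integrable (fun ω => g (2 * m + 1) ω (k (2 * m + 1) ω)) μ :=
    Integrable.of_bound (hgk _).aestronglyMeasurable 1 (ae_of_all _ fun ω => by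
      rw [hg, Real.norm_eq_abs, abs_of_nonneg (opponentGain_nonneg ..)]
      exact opponentGain_le_one ..)
  calc ∫ ω, g (2 * m + 1) ω (k (2 * m + 1) ω) ∂μ ≤ ∫ ω, A.indicator 1 ω ∂μ :=
        integral_mono_ae hint ((integrable_const 1).indicator hAmeas) hbound
    _ = (1 / 2) ^ m := by
        rw [integral_indicator_one hAmeas, measureReal_def, hA, ENNReal.toReal_pow]
        norm_num

end SingleStream

theorem le_sum_ite_mod_two_one_sub_pow (T : ℕ) :
    0.99 * (T / 2 : ℕ) ≤ ∑ t ∈ range T, (if t % 2 = 1 then 1 - (0.1 : ℝ) ^ (t + 1) else 0) := by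
  calc 0.99 * ((T / 2 : ℕ) : ℝ) = ∑ t ∈ range T, (if t % 2 = 1 then (0.99 : ℝ) else 0) := by
        rw [sum_range_ite_mod_two (fun _ => (0.99 : ℝ)), sum_const, card_range, nsmul_eq_mul,
          mul_comm]
    _ ≤ _ := by
        refine sum_le_sum fun t _ => ?_
        split_ifs with ht
        · have : (0.1 : ℝ) ^ (t + 1) ≤ 0.1 ^ 2 :=
            pow_le_pow_of_le_one (by norm_num) (by norm_num) (by omega)
          linarith
        · rfl

/-- **linear regret of the single-stream version against an adaptive
opponent.** The player has `N = 2` strategies and uses the single-stream version: a single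
stream `ε_1, ε_2, …` of i.i.d. Rademacher variables, with uniform tie-breaking variables
`u t`, all jointly independent. Time is 0-indexed: at even time `t` (the paper's odd round
`t+1`) the opponent plays `g_t = (0,0)`; at odd time `t` (the paper's even round `t+1`) the
opponent plays `(0, 1 − 0.1^{t+1})` if the player's previous move was strategy `0`, and
`(1 − 0.1^{t+1}, 0)` otherwise. Then the expected regret satisfies
`E[R_T] ≥ 0.225·T − 2` for every `T`. -/
theorem single_stream_linear_regret
    {Ω : Type*} [MeasurableSpace Ω] (μ : Measure Ω) [IsProbabilityMeasure μ]
    (ε : ℕ → Ω → ℝ) (u : ℕ → Ω → ℝ)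
    (hεmeas : ∀ t, Measurable (ε t)) (humeas : ∀ t, Measurable (u t))
    (hεRad : ∀ t, μ {ω | ε t ω = 1} = 1 / 2 ∧ μ {ω | ε t ω = -1} = 1 / 2)
    (huUnif : ∀ t, μ.map (u t) = volume.restrict (Set.Ico (0 : ℝ) 1))
    (hIndep : iIndepFun
        (fun (p : ℕ ⊕ ℕ) (ω : Ω) => Sum.elim (fun n => ε n ω) (fun n => u n ω) p) μ)
    (k : ℕ → Ω → Fin 2) (g : ℕ → Ω → Fin 2 → ℝ)
    (hgEven : ∀ t ω j, t % 2 = 0 → g t ω j = 0)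
    (hgOdd : ∀ t ω (j : Fin 2), t % 2 = 1 →
        g t ω j = (if k (t - 1) ω = 0
          then (if j = 1 then 1 - (0.1 : ℝ) ^ (t + 1) else 0)
          else (if j = 0 then 1 - (0.1 : ℝ) ^ (t + 1) else 0)))
    (hplay : ∀ t ω, k t ω = pick (argmaxSet (fun j =>
        ∑ τ ∈ Finset.range t, (1 + ε τ ω) * g τ ω j)) (u t ω)) :
    ∀ T : ℕ, (0.225 : ℝ) * T - 2
      ≤ ∫ ω, ((⨆ j : Fin 2, ∑ t ∈ Finset.range T, g t ω j)
          - ∑ t ∈ Finset.range T, g t ω (k t ω)) ∂μ := by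
  intro T
  have hg : ∀ t ω j, g t ω j = opponentGain t (k (t - 1) ω) j := fun t ω j => by
    rcases Nat.mod_two_eq_zero_or_one t with ht | ht
    · simp [hgEven t ω j ht, opponentGain, ht]
    · rw [hgOdd t ω j ht, ite_eq_opponentGain _ _ _ ht]
  have hk := measurable_play hεmeas humeas hg hplay
  have hgm : ∀ t j, Measurable fun ω => g t ω j := fun t j => by
    simp_rw [hg]
    exact (Measurable.of_discrete (f := fun p : Fin 2 => opponentGain t p j)).comp (hk _)
  have hgk : ∀ t, Measurable fun ω => g t ω (k t ω) := fun t => by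
    simp_rw [hg]
    exact (Measurable.of_discrete (f := fun p : Fin 2 × Fin 2 => opponentGain t p.1 p.2)).comp
      ((hk _).prodMk (hk t))
  have hW : ∀ ω, ∑ t ∈ range T, (g t ω 0 + g t ω 1)
      = ∑ t ∈ range T, (if t % 2 = 1 then 1 - (0.1 : ℝ) ^ (t + 1) else 0) := fun ω => by
    simp only [hg, opponentGain_zero_add_one]
  calc (0.225 : ℝ) * T - 2 ≤ 0.99 * (T / 2 : ℕ) / 2 - ∑ m ∈ range (T / 2), (1 / 2 : ℝ) ^ m :=
        linear_le_half_sub_geom_sum T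
    _ ≤ (∑ t ∈ range T, (if t % 2 = 1 then 1 - (0.1 : ℝ) ^ (t + 1) else 0)) / 2
          - ∑ t ∈ range T, ∫ ω, g t ω (k t ω) ∂μ := by
        refine sub_le_sub (by linarith [le_sum_ite_mod_two_one_sub_pow T]) ?_
        rw [← sum_range_ite_mod_two]
        exact sum_le_sum fun t _ =>
          integral_gain_le hεmeas hεRad humeas huUnif hIndep hg hplay hgk t
    _ ≤ _ := half_sub_sum_integral_le_integral_regret T hW hgm hgk
        (fun t ω j => hg t ω j ▸ opponentGain_nonneg ..)
        (fun t ω j => hg t ω j ▸ opponentGain_le_one ..)
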